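/- arXiv:1609.05261 — 2 statements merged into one kernel-verified Lean document; each statement's English description precedes it below -/
import Mathlib

section
/- Every Noetherian multiplication ring is a BL-ring; that is, if R is a commutative Noetherian ring such that for all ideals I ⊆ J there exists an ideal K with I = J·K, then the ideals of R satisfy BLR-1 and BLR-2. -/
/-!
Write `(I : J)` for `I.colon J`. In a multiplication ring every `I ≤ J` satisfies
`I = J * (I : J)`. Applied to `I ⊓ J ≤ I` this is BLR-1. Applied to `I ≤ I + J` and `J ≤ I + J`
it gives `I + J = (I + J) * ((I : J) + (J : I))`; as `I + J` is finitely generated, Nakayama's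
lemma yields `(I : J) + (J : I) + Ann (I + J) = R`, and `Ann (I + J)` already lies in `(I : J)`.
-/

def IsMultiplicationRing (R : Type*) [CommRing R] : Prop :=
  ∀ I J : Ideal R, I ≤ J → ∃ K : Ideal R, I = J * K

namespace Ideal

variable {R : Type*} [CommRing R]

theorem mul_colon_le (I J : Ideal R) : J * I.colon J ≤ I :=
  mul_le.mpr fun x hx r hr => mul_comm r x ▸ Submodule.mem_colon.mp hr x hx

theorem le_colon_of_eq_mul {I J K : Ideal R} (h : I = J * K) : K ≤ I.colon J :=
  fun r hr => Submodule.mem_colon.mpr fun x hx => by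
    rw [smul_eq_mul, mul_comm, h]
    exact mul_mem_mul hx hr

theorem eq_mul_colon_of_eq_mul {I J K : Ideal R} (h : I = J * K) : I = J * I.colon J :=
  le_antisymm (h.le.trans (mul_mono_right (le_colon_of_eq_mul h))) (mul_colon_le I J)

theorem colon_sup_self_left (I J : Ideal R) : I.colon ↑(I ⊔ J) = I.colon J := by
  rw [← Submodule.span_eq I, ← Submodule.span_eq J, ← Submodule.span_union, Ideal.colon_span,
    Submodule.span_eq, Submodule.span_eq, Submodule.colon_union,
    (Submodule.colon_eq_top_iff_subset _).mpr subset_rfl, top_inf_eq]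

theorem annihilator_le_colon (I J : Ideal R) : Submodule.annihilator J ≤ I.colon J :=
  Submodule.bot_colon (N := J) ▸ Submodule.colon_mono bot_le subset_rfl

theorem sup_annihilator_eq_top_of_le_mul {A C : Ideal R} (hA : A.FG) (hle : A ≤ A * C) :
    C ⊔ Submodule.annihilator A = ⊤ := by
  rw [mul_comm, ← smul_eq_mul] at hle
  obtain ⟨r, hr, hrA⟩ :=
    Submodule.exists_sub_one_mem_and_smul_eq_zero_of_fg_of_le_smul C A hA hle
  have hr_ann : r ∈ Submodule.annihilator A :=
    Submodule.mem_annihilator.mpr fun a ha => hrA a ha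
  rw [eq_top_iff_one]
  simpa using Submodule.sub_mem _ (Submodule.mem_sup_right hr_ann) (Submodule.mem_sup_left hr)

theorem eq_mul_colon_of_le (hR : IsMultiplicationRing R) {I J : Ideal R} (h : I ≤ J) :
    I = J * I.colon J :=
  let ⟨_, hK⟩ := hR I J h
  eq_mul_colon_of_eq_mul hK

theorem inf_eq_mul_colon (hR : IsMultiplicationRing R) (I J : Ideal R) :
    I ⊓ J = I * J.colon I := by
  rw [eq_mul_colon_of_le hR inf_le_left, inf_comm,
    Submodule.colon_inf_eq_left_of_subset subset_rfl]

theorem sup_eq_mul_colon_add_colon (hR : IsMultiplicationRing R) (I J : Ideal R) :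
    I ⊔ J = (I ⊔ J) * (J.colon I + I.colon J) := by
  have hI := eq_mul_colon_of_le hR (le_sup_left : I ≤ I ⊔ J)
  have hJ := eq_mul_colon_of_le hR (le_sup_right : J ≤ I ⊔ J)
  rw [colon_sup_self_left] at hI
  rw [sup_comm I J, colon_sup_self_left, sup_comm J I] at hJ
  rw [mul_add, add_eq_sup, ← hI, ← hJ, sup_comm]

theorem colon_add_colon_eq_top_of_fg (hR : IsMultiplicationRing R) {I J : Ideal R}
    (hfg : (I ⊔ J).FG) : J.colon I + I.colon J = ⊤ := by
  have hsup := sup_annihilator_eq_top_of_le_mul hfg (sup_eq_mul_colon_add_colon hR I J).le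
  have hann : Submodule.annihilator (I ⊔ J) ≤ J.colon I + I.colon J :=
    (Submodule.annihilator_mono le_sup_right).trans
      ((annihilator_le_colon I J).trans le_sup_right)
  rwa [sup_eq_left.mpr hann] at hsup

end Ideal

/-- Every Noetherian multiplication ring is a BL-ring: if for all ideals `I ≤ J`
there is `K` with `I = J * K`, then the ideals satisfy BLR-1 and BLR-2
(where `I → J = J.colon I`). -/
theorem stmt_2 {R : Type*} [CommRing R] [IsNoetherianRing R]
    (hmul : ∀ I J : Ideal R, I ≤ J → ∃ K : Ideal R, I = J * K) :
    (∀ I J : Ideal R, I ⊓ J = I * (J.colon I)) ∧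
      (∀ I J : Ideal R, J.colon I + I.colon J = ⊤) :=
  ⟨Ideal.inf_eq_mul_colon hmul,
    fun I J => Ideal.colon_add_colon_eq_top_of_fg hmul (IsNoetherian.noetherian (I ⊔ J))⟩
end

section
/- A commutative ring R satisfies BLR-2 if and only if for every ideal I of R the quotient ring R/I satisfies BLR-3. -/
/-!
If `I ⊓ J = 0` then `J : I` is the annihilator of `I`, so BLR-2 implies BLR-3. Colon ideals
commute with `comap` along a surjection, so BLR-2 passes to quotients. Conversely, for
arbitrary `I, J` the images of `I` and `J` in `R ⧸ (I ⊓ J)` meet in `0`, and pulling BLR-3 for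
that pair back to `R` gives `(J : I) + (I : J) = R`.
-/

/-- BLR-3 for a commutative ring: `I ⊓ J = 0` implies `I* + J* = S`,
where `I*` is the annihilator of `I`. -/
def IsBLR3 (S : Type*) [CommRing S] : Prop :=
  ∀ I J : Ideal S, I ⊓ J = ⊥ → I.annihilator + J.annihilator = ⊤

def IsBLR2 (R : Type*) [CommRing R] : Prop :=
  ∀ I J : Ideal R, J.colon I + I.colon J = ⊤

open Ideal

section

variable {R S : Type*} [CommRing R] [CommRing S]

theorem Ideal.annihilator_eq_colon_of_inf_eq_bot {I J : Ideal R} (h : I ⊓ J = ⊥) :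
    I.annihilator = J.colon I := by
  rw [← Submodule.bot_colon, ← h, inf_comm, Submodule.colon_inf_eq_left_of_subset subset_rfl]

theorem isBLR3_iff : IsBLR3 S ↔ ∀ I J : Ideal S, I ⊓ J = ⊥ → J.colon I + I.colon J = ⊤ := by
  refine forall₂_congr fun I J => imp_congr_right fun h => ?_
  rw [annihilator_eq_colon_of_inf_eq_bot h, annihilator_eq_colon_of_inf_eq_bot (inf_comm I J ▸ h)]

theorem IsBLR2.isBLR3 (h : IsBLR2 S) : IsBLR3 S :=
  isBLR3_iff.2 fun I J _ => h I J

section Surjective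

variable {f : R →+* S} (hf : Function.Surjective f)
include hf

theorem Ideal.comap_colon_of_surjective (I J : Ideal S) :
    comap f (J.colon I) = (comap f J).colon (comap f I) := by
  ext x
  simp only [mem_comap, Submodule.mem_colon, smul_eq_mul, hf.forall, map_mul, SetLike.mem_coe]

theorem Ideal.comap_sup_of_surjective (A B : Ideal S) :
    comap f (A ⊔ B) = comap f A ⊔ comap f B := by
  calc comap f (A ⊔ B) = comap f (map f (comap f A ⊔ comap f B)) := by
        rw [map_sup_comap_of_surjective f hf]
    _ = comap f A ⊔ comap f B := by
        rw [comap_map_of_surjective' f hf, sup_eq_left.2 ((ker_le_comap f).trans le_sup_left)]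

theorem IsBLR2.of_surjective (h : IsBLR2 R) : IsBLR2 S := by
  intro I J
  have hsum := congrArg (map f) (h (comap f I) (comap f J))
  rwa [← comap_colon_of_surjective hf, ← comap_colon_of_surjective hf, Submodule.add_eq_sup,
    map_sup_comap_of_surjective f hf, Ideal.map_top, ← Submodule.add_eq_sup] at hsum

end Surjective

theorem isBLR2_of_forall_isBLR3_quotient (h : ∀ K : Ideal R, IsBLR3 (R ⧸ K)) : IsBLR2 R := by
  intro I J
  let f := Ideal.Quotient.mk (I ⊓ J)
  have hf : Function.Surjective f := Ideal.Quotient.mk_surjective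
  have hI : comap f (map f I) = I := by
    rw [comap_map_of_surjective' f hf, mk_ker, sup_eq_left.2 inf_le_left]
  have hJ : comap f (map f J) = J := by
    rw [comap_map_of_surjective' f hf, mk_ker, sup_eq_left.2 inf_le_right]
  have hdisj : map f I ⊓ map f J = ⊥ := by
    rw [← map_inf_comap_of_surjective f hf, hI, hJ, map_quotient_self]
  have hsum := congrArg (comap f) (isBLR3_iff.1 (h _) _ _ hdisj)
  rwa [Submodule.add_eq_sup, comap_sup_of_surjective hf, comap_colon_of_surjective hf,
    comap_colon_of_surjective hf, hI, hJ, comap_top] at hsum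

end

/-- A commutative ring `R` satisfies BLR-2 (`(I → J) + (J → I) = R`, with
`I → J = J.colon I`) iff every quotient of `R` by an ideal satisfies BLR-3. -/
theorem stmt_6 {R : Type*} [CommRing R] :
    (∀ I J : Ideal R, J.colon I + I.colon J = ⊤) ↔
      ∀ I : Ideal R, IsBLR3 (R ⧸ I) :=
  ⟨fun h _ => (IsBLR2.of_surjective Ideal.Quotient.mk_surjective h).isBLR3,
    isBLR2_of_forall_isBLR3_quotient⟩
end
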